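/- Lemma 1.1(c): There exists a unique chamber C₀' in X relative to R such that −ω lies in the closure of C₀' and C̃₀ = C̃₀'. Moreover {α ∈ R^+ : ker α separates C₀ and C₀'} = R^+ ∖ R^+_ω; in particular l_R(C₀, C₀') = |R^+| − |R^+_ω|. -/

import Mathlib

/-!
A chamber is determined by the signs of the roots at any one of its points. For `x₀ ∈ C₀` and
`t` large, the point `x₀ - t • ω` keeps the signs of `x₀` on the roots vanishing at `ω` and takes
the sign opposite to that of `ω` on all other roots; these sign conditions are exactly
`−ω ∈ C̄₀'` and `C̃₀' = C̃₀`, which gives existence and uniqueness of `C₀'`. Since `ω ∈ C̄₀`, a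
root positive on `C₀` and not vanishing at `ω` is positive at `ω`, hence negative on `C₀'`; so
the separating positive roots are those of `R⁺ ∖ R⁺_ω`. As `R = −R` is reduced, the hyperplanes
`ker α` are in bijection with `R⁺`, which turns this into `l(C₀, C₀') = |R⁺| − |R⁺_ω|`.
-/

open Pointwise
open scoped Classical

namespace GKM

variable {V : Type*} [AddCommGroup V] [Module ℝ V]

/-- The dual cone `C* = {λ | λ ≥ 0 on C}` of a subset `C` of `V`. -/
def dualCone (C : Set V) : Set (Module.Dual ℝ V) := {l | ∀ x ∈ C, 0 ≤ l x}

/-- `C` is a closed convex polyhedral cone: the set of nonnegative linear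
combinations of a finite subset of `V`. -/
def IsPolyhedralCone (C : Set V) : Prop :=
  ∃ S : Finset V, C = {x | ∃ c : V → ℝ, (∀ v, 0 ≤ c v) ∧ x = ∑ v ∈ S, c v • v}

/-- `F` is a (closed) face of the cone `C`. -/
def IsFaceOf (F C : Set V) : Prop := ∃ l ∈ dualCone C, F = C ∩ {x | l x = 0}

/-- The dimension of (the linear span of) a subset of `V`. -/
noncomputable def sdim (F : Set V) : ℕ := Module.finrank ℝ (Submodule.span ℝ F)

/-- `ℤ`-valued characteristic function `ξ_S`. -/
noncomputable def ind {α : Type*} (S : Set α) (a : α) : ℤ := if a ∈ S then 1 else 0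

/-- `ψ_C(x,λ) = Σ_{F face of C} (−1)^{dim F} ξ_{(F^⊥)*}(x) · ξ_{F*}(λ)`,
where `(F^⊥)* = C + span F` and `F*` is the dual cone of `F`. -/
noncomputable def psi (C : Set V) (x : V) (l : Module.Dual ℝ V) : ℤ :=
  ∑ᶠ F ∈ {F : Set V | IsFaceOf F C},
    (-1 : ℤ) ^ sdim F * ind (C + (Submodule.span ℝ F : Set V)) x * ind (dualCone F) l

/-- `x` is regular for the hyperplane arrangement `{ker α | α ∈ S}`. -/
def IsRegular (S : Set (Module.Dual ℝ V)) (x : V) : Prop := ∀ α ∈ S, α x ≠ 0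

/-- `C` is a chamber of the arrangement `{ker α | α ∈ S}`: a connected component of
the set of regular points, equivalently (for a finite arrangement, which is the case
throughout) a nonempty maximal subset on which each `α ∈ S` has constant sign. -/
def IsChamber (S : Set (Module.Dual ℝ V)) (C : Set V) : Prop :=
  ∃ x, IsRegular S x ∧ C = {y | ∀ α ∈ S, 0 < α x * α y}

/-- The closure of a chamber, described combinatorially (for a chamber of a finite
hyperplane arrangement this coincides with the topological closure). -/
def chClosure (S : Set (Module.Dual ℝ V)) (C : Set V) : Set V :=
  {y | ∀ α ∈ S, ∀ x ∈ C, 0 ≤ α x * α y}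

/-- The hyperplane `ker α` separates `C₁` and `C₂`. -/
def Separates (α : Module.Dual ℝ V) (C₁ C₂ : Set V) : Prop :=
  ∀ x₁ ∈ C₁, ∀ x₂ ∈ C₂, α x₁ * α x₂ < 0

/-- `l(C₁,C₂)`: the number of hyperplanes of the arrangement separating `C₁`,`C₂`. -/
noncomputable def sep (S : Set (Module.Dual ℝ V)) (C₁ C₂ : Set V) : ℕ :=
  {H : Set V | ∃ α ∈ S, H = {x | α x = 0} ∧ Separates α C₁ C₂}.ncard

/-- `ε(C₁,C₂) = (−1)^{l(C₁,C₂)}`. -/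
noncomputable def eps (S : Set (Module.Dual ℝ V)) (C₁ C₂ : Set V) : ℤ :=
  (-1) ^ sep S C₁ C₂

/-- `ψ_R(C₀,x,λ) = Σ_C ε(C₀,C) ψ_{C̄}(x,λ)`, the sum over all chambers `C`. -/
noncomputable def psiR (S : Set (Module.Dual ℝ V)) (C₀ : Set V) (x : V)
    (l : Module.Dual ℝ V) : ℤ :=
  ∑ᶠ C ∈ {C : Set V | IsChamber S C}, eps S C₀ C * psi (chClosure S C) x l

/-- `λ ∈ X*` is `R`-regular: it vanishes on no nonzero element of a 1-dimensional
face of the closure of a chamber in `X`. -/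
def RRegular (S : Set (Module.Dual ℝ V)) (l : Module.Dual ℝ V) : Prop :=
  ∀ C : Set V, IsChamber S C → ∀ F : Set V, IsFaceOf F (chClosure S C) →
    sdim F = 1 → ∀ ω ∈ F, ω ≠ (0 : V) → l ω ≠ 0

/-- `ω` is a nonzero element of a 1-dimensional face of the closure of `C₀`. -/
def InOneDimFaceOfClosure (S : Set (Module.Dual ℝ V)) (C₀ : Set V) (ω : V) : Prop :=
  ω ≠ 0 ∧ ∃ F : Set V, IsFaceOf F (chClosure S C₀) ∧ sdim F = 1 ∧ ω ∈ F

/-- `(X, X*, R, R∨)` is a (reduced, crystallographic) root system, `R ⊂ X*`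
spanning `X*`, with coroot `α∨ = coroot α ∈ X` for each `α ∈ R`. -/
structure IsRootSystem (R : Set (Module.Dual ℝ V)) (coroot : Module.Dual ℝ V → V) : Prop where
  finite : R.Finite
  ne_zero : ∀ α ∈ R, α ≠ 0
  span_top : Submodule.span ℝ R = ⊤
  root_coroot_two : ∀ α ∈ R, α (coroot α) = 2
  pairing_int : ∀ α ∈ R, ∀ β ∈ R, ∃ n : ℤ, β (coroot α) = (n : ℝ)
  reflect_root_mem : ∀ α ∈ R, ∀ β ∈ R, β - β (coroot α) • α ∈ R
  reflect_coroot : ∀ α ∈ R, ∀ β ∈ R,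
    coroot (β - β (coroot α) • α) = coroot β - α (coroot β) • coroot α
  reduced : ∀ α ∈ R, ∀ c : ℝ, c • α ∈ R → c = 1 ∨ c = -1

/-- The Weyl group `W(R)`, the subgroup of `GL(X)` generated by the reflections
`s_α : x ↦ x − α(x)·α∨`, `α ∈ R`. -/
def weylGroup (R : Set (Module.Dual ℝ V)) (coroot : Module.Dual ℝ V → V) :
    Subgroup (V ≃ₗ[ℝ] V) :=
  Subgroup.closure {w : V ≃ₗ[ℝ] V | ∃ α ∈ R, ∀ x, w x = x - α x • coroot α}

/-- The set `R⁺` of roots positive on the chamber `C`. -/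
def posRoots (R : Set (Module.Dual ℝ V)) (C : Set V) : Set (Module.Dual ℝ V) :=
  {α ∈ R | ∀ x ∈ C, 0 < α x}

/-- The root system `R_ω = {α ∈ R | α(ω) = 0}` viewed on the quotient `X/ℝω`:
the set of functionals on `X/ℝω` whose pullback to `X` lies in `R`
(such a pullback automatically kills `ω`, hence lies in `R_ω`). -/
def quotRoots (R : Set (Module.Dual ℝ V)) (ω : V) :
    Set (Module.Dual ℝ (V ⧸ Submodule.span ℝ ({ω} : Set V))) :=
  {β | β.comp (Submodule.span ℝ ({ω} : Set V)).mkQ ∈ R}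

/-- The root system `R_α` (roots `β` with `α(β∨) = 0`) restricted to the
hyperplane `Y = ker α`. -/
def subRoots (R : Set (Module.Dual ℝ V)) (coroot : Module.Dual ℝ V → V)
    (α : Module.Dual ℝ V) : Set (Module.Dual ℝ ↥(LinearMap.ker α)) :=
  {m | ∃ β ∈ R, α (coroot β) = 0 ∧ m = β.comp (LinearMap.ker α).subtype}

theorem mul_pos_of_mul_pos_of_mul_pos {a b c : ℝ} (hab : 0 < a * b) (hbc : 0 < b * c) :
    0 < a * c := by
  nlinarith [mul_pos hab hbc, sq_nonneg b]

theorem mul_nonneg_of_mul_pos_of_mul_nonneg {a b c : ℝ} (hab : 0 < a * b) (hbc : 0 ≤ b * c) :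
    0 ≤ a * c := by
  have hb : b ≠ 0 := right_ne_zero_of_mul hab.ne'
  nlinarith [mul_nonneg hab.le hbc, sq_pos_of_ne_zero hb]

theorem exists_smul_eq_of_ker_le {K E : Type*} [Field K] [AddCommGroup E] [Module K E]
    {f g : Module.Dual K E} (h : LinearMap.ker f ≤ LinearMap.ker g) : ∃ c : K, c • f = g := by
  have hg : g ∈ Submodule.span K (Set.range fun _ : Unit => f) :=
    mem_span_of_iInf_ker_le_ker (by simpa only [iInf_const] using h)
  rwa [Set.range_const, Submodule.mem_span_singleton] at hg

section Chambers

variable {S T : Set (Module.Dual ℝ V)} {C C' : Set V} {x y z : V}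

/-- Empty unless `x` is `S`-regular. -/
def chamberOf (S : Set (Module.Dual ℝ V)) (x : V) : Set V := {y | ∀ α ∈ S, 0 < α x * α y}

theorem mem_chamberOf_self (hx : IsRegular S x) : x ∈ chamberOf S x :=
  fun α hα => mul_self_pos.2 (hx α hα)

theorem isChamber_chamberOf (hx : IsRegular S x) : IsChamber S (chamberOf S x) := ⟨x, hx, rfl⟩

theorem chamberOf_eq_chamberOf (h : ∀ α ∈ S, 0 < α x * α y) :
    chamberOf S x = chamberOf S y := by
  ext z
  constructor
  · intro hz α hα
    exact mul_pos_of_mul_pos_of_mul_pos (by rw [mul_comm]; exact h α hα) (hz α hα)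
  · intro hz α hα
    exact mul_pos_of_mul_pos_of_mul_pos (h α hα) (hz α hα)

namespace IsChamber

theorem isRegular_of_mem (hC : IsChamber S C) (hy : y ∈ C) : IsRegular S y := by
  obtain ⟨x, -, rfl⟩ := hC
  exact fun α hα => right_ne_zero_of_mul (hy α hα).ne'

theorem nonempty (hC : IsChamber S C) : C.Nonempty := by
  obtain ⟨x, hx, rfl⟩ := hC
  exact ⟨x, mem_chamberOf_self hx⟩

theorem eq_chamberOf (hC : IsChamber S C) (hy : y ∈ C) : C = chamberOf S y := by
  obtain ⟨x, -, rfl⟩ := hC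
  exact chamberOf_eq_chamberOf hy

theorem eq_of_mul_pos (hC : IsChamber S C) (hC' : IsChamber S C') (hx : x ∈ C) (hy : y ∈ C')
    (h : ∀ α ∈ S, 0 < α x * α y) : C = C' := by
  rw [hC.eq_chamberOf hx, hC'.eq_chamberOf hy, chamberOf_eq_chamberOf h]

theorem mem_posRoots_iff (hC : IsChamber S C) (hx : x ∈ C) {α : Module.Dual ℝ V} :
    α ∈ posRoots S C ↔ α ∈ S ∧ 0 < α x := by
  refine ⟨fun hα => ⟨hα.1, hα.2 x hx⟩, fun ⟨hαS, hαx⟩ => ⟨hαS, fun y hy => ?_⟩⟩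
  rw [hC.eq_chamberOf hx] at hy
  exact pos_of_mul_pos_right (hy α hαS) hαx.le

theorem mem_chClosure_iff (hC : IsChamber S C) (hx : x ∈ C) :
    z ∈ chClosure S C ↔ ∀ α ∈ S, 0 ≤ α x * α z := by
  refine ⟨fun hz α hα => hz α hα x hx, fun hz α hα y hy => ?_⟩
  rw [hC.eq_chamberOf hx] at hy
  exact mul_nonneg_of_mul_pos_of_mul_nonneg (by rw [mul_comm]; exact hy α hα) (hz α hα)

theorem separates_iff (hC : IsChamber S C) (hC' : IsChamber S C') {α : Module.Dual ℝ V}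
    (hα : α ∈ S) (hx : x ∈ C) (hy : y ∈ C') : Separates α C C' ↔ α x * α y < 0 := by
  refine ⟨fun h => h x hx y hy, fun h x' hx' y' hy' => ?_⟩
  rw [hC.eq_chamberOf hx] at hx'
  rw [hC'.eq_chamberOf hy] at hy'
  nlinarith [mul_pos (hx' α hα) (hy' α hα)]

theorem exists_superset_iff (hTS : T ⊆ S) (hC : IsChamber S C) (hC' : IsChamber S C')
    (hx : x ∈ C) (hy : y ∈ C') :
    (∃ D, IsChamber T D ∧ C ⊆ D ∧ C' ⊆ D) ↔ ∀ α ∈ T, 0 < α x * α y := by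
  constructor
  · rintro ⟨D, ⟨z, -, rfl⟩, hCD, hC'D⟩ α hα
    exact mul_pos_of_mul_pos_of_mul_pos (by rw [mul_comm]; exact hCD hx α hα) (hC'D hy α hα)
  · intro h
    refine ⟨chamberOf T x, isChamber_chamberOf fun α hα => hC.isRegular_of_mem hx α (hTS hα),
      fun z hz α hα => ?_, fun z hz α hα => ?_⟩
    · rw [hC.eq_chamberOf hx] at hz
      exact hz α (hTS hα)
    · rw [hC'.eq_chamberOf hy] at hz
      exact mul_pos_of_mul_pos_of_mul_pos (h α hα) (hz α (hTS hα))

end IsChamber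

end Chambers

section OppositeChamber

variable {S : Set (Module.Dual ℝ V)} {C C' : Set V} {x y z ω : V}

/-- For `x ∈ C₀`, the points `y` with `IsOppositeAlong R ω x y` are exactly those of `C₀'`. -/
def IsOppositeAlong (S : Set (Module.Dual ℝ V)) (ω x y : V) : Prop :=
  ∀ α ∈ S, (α ω = 0 → 0 < α x * α y) ∧ (α ω ≠ 0 → α y * α ω < 0)

theorem IsOppositeAlong.isRegular (h : IsOppositeAlong S ω x y) : IsRegular S y := by
  intro α hα hy0
  by_cases h0 : α ω = 0
  · simpa [hy0] using (h α hα).1 h0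
  · simpa [hy0] using (h α hα).2 h0

theorem IsOppositeAlong.mul_pos (hy : IsOppositeAlong S ω x y) (hz : IsOppositeAlong S ω x z) :
    ∀ α ∈ S, 0 < α y * α z := by
  intro α hα
  by_cases h0 : α ω = 0
  · exact mul_pos_of_mul_pos_of_mul_pos (by rw [mul_comm]; exact (hy α hα).1 h0) ((hz α hα).1 h0)
  · exact mul_pos_of_mul_pos_of_mul_pos (b := -α ω) (by linarith [(hy α hα).2 h0])
      (by linarith [(hz α hα).2 h0])

/-- Moving far enough from `x` in the direction `-ω` crosses exactly the hyperplanes not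
containing `ω`. -/
theorem exists_isOppositeAlong_sub_smul (hS : S.Finite) (hx : IsRegular S x) (ω : V) :
    ∃ t : ℝ, IsOppositeAlong S ω x (x - t • ω) := by
  have hfar : ∀ α ∈ S, ∀ᶠ t : ℝ in Filter.atTop, α ω ≠ 0 → α (x - t • ω) * α ω < 0 := by
    intro α _
    filter_upwards [Filter.eventually_gt_atTop (α x * α ω / α ω ^ 2)] with t ht h0
    rw [div_lt_iff₀ (by positivity)] at ht
    simp only [map_sub, map_smul, smul_eq_mul]
    nlinarith
  obtain ⟨t, ht⟩ := ((Filter.eventually_all_finite hS).2 hfar).exists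
  refine ⟨t, fun α hα => ⟨fun h0 => ?_, ht α hα⟩⟩
  simpa [h0] using mul_self_pos.2 (hx α hα)

theorem isOppositeAlong_iff (hC : IsChamber S C) (hC' : IsChamber S C') (hx : x ∈ C)
    (hy : y ∈ C') :
    ((-ω) ∈ chClosure S C' ∧ ∃ D, IsChamber {α ∈ S | α ω = 0} D ∧ C ⊆ D ∧ C' ⊆ D) ↔
      IsOppositeAlong S ω x y := by
  rw [hC'.mem_chClosure_iff hy, hC.exists_superset_iff (Set.sep_subset _ _) hC' hx hy]
  simp only [map_neg, mul_neg, neg_nonneg]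
  constructor
  · rintro ⟨hcl, hsame⟩ α hα
    exact ⟨fun h0 => hsame α ⟨hα, h0⟩,
      fun h0 => (hcl α hα).lt_of_ne (mul_ne_zero (hC'.isRegular_of_mem hy α hα) h0)⟩
  · intro h
    refine ⟨fun α hα => ?_, fun α hα => (h α hα.1).1 hα.2⟩
    by_cases h0 : α ω = 0
    · simp [h0]
    · exact ((h α hα).2 h0).le

theorem setOf_separates_eq_posRoots_diff (hC : IsChamber S C) (hC' : IsChamber S C')
    (hx : x ∈ C) (hy : y ∈ C') (hω : ω ∈ chClosure S C) (h : IsOppositeAlong S ω x y) :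
    {α ∈ posRoots S C | Separates α C C'} =
      posRoots S C \ ({α ∈ S | α ω = 0} ∩ posRoots S C) := by
  ext α
  simp only [Set.mem_ofPred_eq, Set.mem_sdiff, Set.mem_inter_iff]
  refine and_congr_right fun hα => ?_
  rw [hC.separates_iff hC' hα.1 hx hy]
  have hαx : 0 < α x := hα.2 x hx
  have hαω : 0 ≤ α ω := nonneg_of_mul_nonneg_right (hω α hα.1 x hx) hαx
  constructor
  · rintro hneg ⟨⟨-, h0⟩, -⟩
    linarith [(h α hα.1).1 h0]
  · intro hnot
    have h0 : α ω ≠ 0 := fun h0 => hnot ⟨⟨hα.1, h0⟩, hα⟩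
    have hαy : α y < 0 := neg_of_mul_neg_left ((h α hα.1).2 h0) hαω
    exact mul_neg_of_pos_of_neg hαx hαy

end OppositeChamber

section Counting

variable {S : Set (Module.Dual ℝ V)} {C C' : Set V}

theorem Separates.neg {α : Module.Dual ℝ V} (h : Separates α C C') : Separates (-α) C C' :=
  fun x hx y hy => by simpa only [LinearMap.neg_apply, neg_mul_neg] using h x hx y hy

theorem injOn_ker_posRoots (hred : ∀ α ∈ S, ∀ c : ℝ, c • α ∈ S → c = 1 ∨ c = -1)
    (hC : IsChamber S C) :
    Set.InjOn (fun α : Module.Dual ℝ V => {x | α x = 0}) (posRoots S C) := by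
  intro α hα β hβ hker
  obtain ⟨x, hx⟩ := hC.nonempty
  obtain ⟨c, rfl⟩ := exists_smul_eq_of_ker_le (f := α) (g := β)
    fun v hv => (Set.ext_iff.1 hker v).1 hv
  rcases hred α hα.1 c hβ.1 with rfl | rfl
  · exact (one_smul ℝ α).symm
  · have := hβ.2 x hx
    simp only [LinearMap.smul_apply, smul_eq_mul, neg_one_mul, neg_pos] at this
    exact absurd (hα.2 x hx) this.not_gt

/-- Every hyperplane of the arrangement is the kernel of exactly one root positive on `C`. -/
theorem sep_eq_ncard_posRoots (hneg : ∀ α ∈ S, -α ∈ S)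
    (hred : ∀ α ∈ S, ∀ c : ℝ, c • α ∈ S → c = 1 ∨ c = -1) (hC : IsChamber S C) :
    sep S C C' = {α ∈ posRoots S C | Separates α C C'}.ncard := by
  rw [sep, ← ((injOn_ker_posRoots hred hC).mono (Set.sep_subset _ _)).ncard_image]
  congr 1
  ext H
  simp only [Set.mem_ofPred_eq, Set.mem_image]
  constructor
  · rintro ⟨α, hα, rfl, hsep⟩
    obtain ⟨x, hx⟩ := hC.nonempty
    rcases (hC.isRegular_of_mem hx α hα).lt_or_gt with hαx | hαx
    · refine ⟨-α, ⟨(hC.mem_posRoots_iff hx).2 ⟨hneg α hα, by simpa using hαx⟩, hsep.neg⟩, ?_⟩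
      ext v
      simp
    · exact ⟨α, ⟨(hC.mem_posRoots_iff hx).2 ⟨hα, hαx⟩, hsep⟩, rfl⟩
  · rintro ⟨α, ⟨hα, hsep⟩, rfl⟩
    exact ⟨α, hα.1, rfl, hsep⟩

end Counting

theorem IsRootSystem.neg_mem {R : Set (Module.Dual ℝ V)} {coroot : Module.Dual ℝ V → V}
    (hR : IsRootSystem R coroot) {α : Module.Dual ℝ V} (hα : α ∈ R) : -α ∈ R := by
  have h := hR.reflect_root_mem α hα α hα
  rwa [hR.root_coroot_two α hα, two_smul, sub_add_cancel_left] at h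

theorem InOneDimFaceOfClosure.mem_chClosure {S : Set (Module.Dual ℝ V)} {C : Set V} {ω : V}
    (h : InOneDimFaceOfClosure S C ω) : ω ∈ chClosure S C := by
  obtain ⟨-, F, ⟨l, -, rfl⟩, -, hωF⟩ := h
  exact hωF.1

theorem lemma_1_1_c_general
    {V : Type*} [AddCommGroup V] [Module ℝ V]
    (R : Set (Module.Dual ℝ V)) (coroot : Module.Dual ℝ V → V)
    (hRS : IsRootSystem R coroot)
    (C₀ : Set V) (hC₀ : IsChamber R C₀)
    (ω : V) (hωface : InOneDimFaceOfClosure R C₀ ω)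
    (Rω RP RPω : Set (Module.Dual ℝ V))
    (hRω : Rω = {α ∈ R | α ω = 0})
    (hRP : RP = posRoots R C₀) (hRPω : RPω = Rω ∩ RP) :
    -- existence and uniqueness of `C₀'`
    (∃! C' : Set V, IsChamber R C' ∧ (-ω) ∈ chClosure R C' ∧
        ∃ D : Set V, IsChamber Rω D ∧ C₀ ⊆ D ∧ C' ⊆ D) ∧
    -- the further properties of any such `C₀'`
    (∀ C' : Set V, IsChamber R C' → (-ω) ∈ chClosure R C' →
        (∃ D : Set V, IsChamber Rω D ∧ C₀ ⊆ D ∧ C' ⊆ D) →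
        ({α ∈ RP | Separates α C₀ C'} = RP \ RPω) ∧
        (sep R C₀ C' : ℤ) = (RP.ncard : ℤ) - (RPω.ncard : ℤ)) := by
  subst hRω hRP hRPω
  obtain ⟨x₀, hx₀⟩ := hC₀.nonempty
  obtain ⟨t, ht⟩ := exists_isOppositeAlong_sub_smul hRS.finite (hC₀.isRegular_of_mem hx₀) ω
  have hC₀' := isChamber_chamberOf ht.isRegular
  have hC₀'opp := (isOppositeAlong_iff hC₀ hC₀' hx₀ (mem_chamberOf_self ht.isRegular)).2 ht
  refine ⟨⟨chamberOf R (x₀ - t • ω), ⟨hC₀', hC₀'opp⟩, ?_⟩, ?_⟩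
  · rintro C' ⟨hC', hC'opp⟩
    obtain ⟨y, hy⟩ := hC'.nonempty
    exact hC'.eq_of_mul_pos hC₀' hy (mem_chamberOf_self ht.isRegular)
      (((isOppositeAlong_iff hC₀ hC' hx₀ hy).1 hC'opp).mul_pos ht)
  · intro C' hC' hcl hD
    obtain ⟨y, hy⟩ := hC'.nonempty
    have hsep := setOf_separates_eq_posRoots_diff hC₀ hC' hx₀ hy hωface.mem_chClosure
      ((isOppositeAlong_iff hC₀ hC' hx₀ hy).1 ⟨hcl, hD⟩)
    have hfin : (posRoots R C₀).Finite := hRS.finite.subset (Set.sep_subset _ _)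
    have hcard := Set.ncard_sdiff_add_ncard_of_subset
      (Set.inter_subset_right (s := {α ∈ R | α ω = 0})) hfin
    rw [sep_eq_ncard_posRoots (fun _ => hRS.neg_mem) hRS.reduced hC₀]
    exact ⟨hsep, by rw [hsep]; omega⟩

/-- **Lemma 1.1(c)**: there is a unique chamber `C₀'` with `−ω` in its closure and
`C̃₀ = C̃₀'`; moreover the positive roots whose hyperplanes separate `C₀, C₀'` are
exactly `R⁺ \ R⁺_ω`, and `l(C₀,C₀') = |R⁺| − |R⁺_ω|`. -/
theorem lemma_1_1_c
    {V : Type*} [AddCommGroup V] [Module ℝ V] [FiniteDimensional ℝ V]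
    (R : Set (Module.Dual ℝ V)) (coroot : Module.Dual ℝ V → V)
    (hRS : IsRootSystem R coroot)
    (C₀ : Set V) (hC₀ : IsChamber R C₀)
    (ω : V) (hωface : InOneDimFaceOfClosure R C₀ ω)
    (Rω RP RPω : Set (Module.Dual ℝ V))
    (hRω : Rω = {α ∈ R | α ω = 0})
    (hRP : RP = posRoots R C₀) (hRPω : RPω = Rω ∩ RP) :
    -- existence and uniqueness of `C₀'`
    (∃! C' : Set V, IsChamber R C' ∧ (-ω) ∈ chClosure R C' ∧
        ∃ D : Set V, IsChamber Rω D ∧ C₀ ⊆ D ∧ C' ⊆ D) ∧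
    -- the further properties of any such `C₀'`
    (∀ C' : Set V, IsChamber R C' → (-ω) ∈ chClosure R C' →
        (∃ D : Set V, IsChamber Rω D ∧ C₀ ⊆ D ∧ C' ⊆ D) →
        ({α ∈ RP | Separates α C₀ C'} = RP \ RPω) ∧
        (sep R C₀ C' : ℤ) = (RP.ncard : ℤ) - (RPω.ncard : ℤ)) :=
  lemma_1_1_c_general R coroot hRS C₀ hC₀ ω hωface Rω RP RPω hRω hRP hRPω

end GKM
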